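/- Consider a feasible instance of the BMILP, i.e., F ≠ ∅, and let v* = inf{c·x + e·z : (x,z) ∈ F}, which is finite by the boundedness assumptions. Then there exist x* ∈ ℤ^n and an integer vector β ∈ ℤ^m such that the polytope T = {z ∈ ℝ^d : z ≥ 0, D·z ≤ p − C·x*, β ≤ B·z + u ≤ β + 1} is nonempty and compact, and v* = c·x* + min{e·z : z ∈ T}. -/

import Mathlib

open Matrix

/-- A real vector has all integer entries. -/
def IsIntVec {n : ℕ} (x : Fin n → ℝ) : Prop := ∀ i, ∃ k : ℤ, x i = (k : ℝ)

/-- The upper-level polyhedron P. -/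
def upperP {n d h : ℕ} (C : Matrix (Fin h) (Fin n) ℤ) (D : Matrix (Fin h) (Fin d) ℤ)
    (p : Fin h → ℤ) : Set ((Fin n → ℝ) × (Fin d → ℝ)) :=
  {xz | (C.map ((↑) : ℤ → ℝ)).mulVec xz.1 + (D.map ((↑) : ℤ → ℝ)).mulVec xz.2 ≤
          (fun i => (p i : ℝ)) ∧ 0 ≤ xz.2}

/-- The bilevel feasible set F. -/
def bilevelF {n d m h : ℕ} (A : Matrix (Fin m) (Fin n) ℤ) (B : Matrix (Fin m) (Fin d) ℤ)
    (C : Matrix (Fin h) (Fin n) ℤ) (D : Matrix (Fin h) (Fin d) ℤ)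
    (ψ : Fin n → ℤ) (u : Fin m → ℤ) (p : Fin h → ℤ) :
    Set ((Fin n → ℝ) × (Fin d → ℝ)) :=
  {xz | xz ∈ upperP C D p ∧ IsIntVec xz.1 ∧
    (A.map ((↑) : ℤ → ℝ)).mulVec xz.1 ≤
      (B.map ((↑) : ℤ → ℝ)).mulVec xz.2 + (fun i => (u i : ℝ)) ∧
    ∀ x' : Fin n → ℝ, IsIntVec x' →
      (A.map ((↑) : ℤ → ℝ)).mulVec x' ≤
        (B.map ((↑) : ℤ → ℝ)).mulVec xz.2 + (fun i => (u i : ℝ)) →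
      (fun i => (ψ i : ℝ)) ⬝ᵥ xz.1 ≤ (fun i => (ψ i : ℝ)) ⬝ᵥ x'}


/-! The lower-level integer feasible set `{x' ∈ ℤⁿ | A x' ≤ B z + u}` depends on `z` only through
`⌊B z + u⌋`. Hence `F` splits into pieces `{x} × slice x β` labelled by `(x, ⌊B z + u⌋)`: a piece
meeting `F` lies entirely in `F`, and since `P` is bounded only finitely many labels occur. The
infimum over `F` is thus attained on a single piece, and there the infimum of `e·z` over the
half-open box `slice x β` equals its minimum over the polytope `T = closedSlice x β`, because the
open segment from any point of `T` to a point of the slice stays in the slice. -/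

open Set Bornology

noncomputable def floorVec {ι : Type*} (v : ι → ℝ) : ι → ℤ := fun i => ⌊v i⌋

lemma Bornology.IsBounded.finite_floorVec_image {ι : Type*} [Fintype ι] {s : Set (ι → ℝ)}
    (hs : IsBounded s) : (floorVec '' s).Finite := by
  classical
  obtain ⟨R, hR⟩ := hs.exists_norm_le
  refine (finite_Icc (fun _ => ⌊-R⌋) (fun _ => ⌊R⌋)).subset ?_
  rintro _ ⟨v, hv, rfl⟩
  have hcoord : ∀ i, |v i| ≤ R := fun i => (norm_le_pi_norm v i).trans (hR v hv)
  exact ⟨fun i => Int.floor_mono (neg_le_of_abs_le (hcoord i)),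
    fun i => Int.floor_mono (le_of_abs_le (hcoord i))⟩

lemma IsIntVec.intCast_floorVec {n : ℕ} {x : Fin n → ℝ} (hx : IsIntVec x) :
    (fun i => ((floorVec x i : ℤ) : ℝ)) = x := by
  funext i
  obtain ⟨k, hk⟩ := hx i
  simp [floorVec, hk]

lemma IsIntVec.intCast_mulVec {k n : ℕ} (A : Matrix (Fin k) (Fin n) ℤ) {x : Fin n → ℝ}
    (hx : IsIntVec x) : IsIntVec (A.map ((↑) : ℤ → ℝ) *ᵥ x) := by
  rw [← hx.intCast_floorVec]
  exact fun i => ⟨(A *ᵥ floorVec x) i, by simp [mulVec, dotProduct]⟩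

lemma IsIntVec.le_iff_le_of_floorVec_eq {k : ℕ} {v b b' : Fin k → ℝ} (hv : IsIntVec v)
    (h : floorVec b = floorVec b') : v ≤ b ↔ v ≤ b' := by
  refine forall_congr' fun i => ?_
  obtain ⟨z, hz⟩ := hv i
  rw [hz, ← Int.le_floor, ← Int.le_floor, show ⌊b i⌋ = ⌊b' i⌋ from congrFun h i]

lemma add_mulVec_convex_combination {ι κ : Type*} [Fintype κ] {a b : ℝ} (hab : a + b = 1)
    (M : Matrix ι κ ℝ) (w : ι → ℝ) (t s : κ → ℝ) :
    w + M *ᵥ (a • t + b • s) = a • (w + M *ᵥ t) + b • (w + M *ᵥ s) := by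
  rw [mulVec_add, mulVec_smul, mulVec_smul]
  linear_combination (norm := module) (-1 : ℝ) • hab • w

lemma csInf_image_eq_of_subset_closure {X : Type*} [TopologicalSpace X] {f : X → ℝ}
    (hf : Continuous f) {s t : Set X} (hst : s ⊆ t) (hts : t ⊆ closure s) (hs : s.Nonempty)
    (ht : BddBelow (f '' t)) : sInf (f '' s) = sInf (f '' t) := by
  have hcl : f '' t ⊆ closure (f '' s) :=
    (image_mono hts).trans (image_closure_subset_closure_image hf)
  exact ((isGLB_iff_of_subset_of_subset_closure (image_mono hst) hcl).2
    (isGLB_csInf ((hs.mono hst).image f) ht)).csInf_eq (hs.image f)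

section

variable {n d m h : ℕ} (A : Matrix (Fin m) (Fin n) ℤ) (B : Matrix (Fin m) (Fin d) ℤ)
  (C : Matrix (Fin h) (Fin n) ℤ) (D : Matrix (Fin h) (Fin d) ℤ)
  (ψ : Fin n → ℤ) (u : Fin m → ℤ) (p : Fin h → ℤ)

def lowerRhs (z : Fin d → ℝ) : Fin m → ℝ := B.map ((↑) : ℤ → ℝ) *ᵥ z + fun i => (u i : ℝ)

def slice (x : Fin n → ℝ) (β : Fin m → ℤ) : Set (Fin d → ℝ) :=
  {z | (x, z) ∈ upperP C D p ∧ floorVec (lowerRhs B u z) = β}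

def closedSlice (x : Fin n → ℝ) (β : Fin m → ℤ) : Set (Fin d → ℝ) :=
  {z | 0 ≤ z ∧ D.map ((↑) : ℤ → ℝ) *ᵥ z ≤ (fun i => (p i : ℝ)) - C.map ((↑) : ℤ → ℝ) *ᵥ x ∧
    (fun i => (β i : ℝ)) ≤ lowerRhs B u z ∧ lowerRhs B u z ≤ fun i => (β i : ℝ) + 1}

noncomputable def sliceLabel (xz : (Fin n → ℝ) × (Fin d → ℝ)) : (Fin n → ℝ) × (Fin m → ℤ) :=
  (xz.1, floorVec (lowerRhs B u xz.2))

def objective (c : Fin n → ℤ) (e : Fin d → ℤ) (xz : (Fin n → ℝ) × (Fin d → ℝ)) : ℝ :=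
  (fun i => (c i : ℝ)) ⬝ᵥ xz.1 + (fun i => (e i : ℝ)) ⬝ᵥ xz.2

variable {A B C D ψ u p}

lemma mem_bilevelF_of_floorVec_eq {x : Fin n → ℝ} {z z' : Fin d → ℝ}
    (hxz : (x, z) ∈ bilevelF A B C D ψ u p) (hz' : (x, z') ∈ upperP C D p)
    (hfloor : floorVec (lowerRhs B u z') = floorVec (lowerRhs B u z)) :
    (x, z') ∈ bilevelF A B C D ψ u p := by
  obtain ⟨-, hint, hlow, hopt⟩ := hxz
  have hiff : ∀ {x'}, IsIntVec x' →
      (A.map ((↑) : ℤ → ℝ) *ᵥ x' ≤ lowerRhs B u z' ↔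
        A.map ((↑) : ℤ → ℝ) *ᵥ x' ≤ lowerRhs B u z) :=
    fun hx' => (hx'.intCast_mulVec A).le_iff_le_of_floorVec_eq hfloor
  exact ⟨hz', hint, (hiff hint).2 hlow, fun x' hx' hle => hopt x' hx' ((hiff hx').1 hle)⟩

lemma mem_upperP_of_mem_closedSlice {x : Fin n → ℝ} {β : Fin m → ℤ} {z : Fin d → ℝ}
    (hz : z ∈ closedSlice B C D u p x β) : (x, z) ∈ upperP C D p :=
  ⟨le_sub_iff_add_le'.1 hz.2.1, hz.1⟩

lemma slice_subset_closedSlice (x : Fin n → ℝ) (β : Fin m → ℤ) :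
    slice B C D u p x β ⊆ closedSlice B C D u p x β := by
  rintro z ⟨⟨hCD, hz0⟩, rfl⟩
  exact ⟨hz0, le_sub_iff_add_le'.2 hCD, fun i => Int.floor_le _,
    fun i => (Int.lt_floor_add_one _).le⟩

lemma isCompact_closedSlice (hP : IsBounded (upperP C D p)) (x : Fin n → ℝ) (β : Fin m → ℤ) :
    IsCompact (closedSlice B C D u p x β) := by
  refine Metric.isCompact_of_isClosed_isBounded ?_
    (hP.image_snd.subset fun z hz => ⟨(x, z), mem_upperP_of_mem_closedSlice hz, rfl⟩)
  have hlow : Continuous (lowerRhs B u) := by unfold lowerRhs; fun_prop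
  simp only [closedSlice, ofPred_and]
  exact (isClosed_le continuous_const continuous_id).inter
    ((isClosed_le (continuous_const.matrix_mulVec continuous_id) continuous_const).inter
      ((isClosed_le continuous_const hlow).inter (isClosed_le hlow continuous_const)))

lemma openSegment_subset_slice {x : Fin n → ℝ} {β : Fin m → ℤ} {t s : Fin d → ℝ}
    (ht : t ∈ closedSlice B C D u p x β) (hs : s ∈ slice B C D u p x β) :
    openSegment ℝ t s ⊆ slice B C D u p x β := by
  rintro _ ⟨a, b, ha, hb, hab, rfl⟩
  obtain ⟨htCD, ht0⟩ := mem_upperP_of_mem_closedSlice ht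
  obtain ⟨⟨hsCD, hs0⟩, hsβ⟩ := hs
  refine ⟨⟨?_, add_nonneg (smul_nonneg ha.le ht0) (smul_nonneg hb.le hs0)⟩, funext fun i => ?_⟩
  · calc _ = a • (C.map ((↑) : ℤ → ℝ) *ᵥ x + D.map ((↑) : ℤ → ℝ) *ᵥ t) +
            b • (C.map ((↑) : ℤ → ℝ) *ᵥ x + D.map ((↑) : ℤ → ℝ) *ᵥ s) :=
          add_mulVec_convex_combination hab _ _ _ _
      _ ≤ a • (fun i => (p i : ℝ)) + b • (fun i => (p i : ℝ)) :=
          add_le_add (smul_le_smul_of_nonneg_left htCD ha.le)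
            (smul_le_smul_of_nonneg_left hsCD hb.le)
      _ = _ := by rw [← add_smul, hab, one_smul]
  · have hcomb :
        lowerRhs B u (a • t + b • s) i = a * lowerRhs B u t i + b * lowerRhs B u s i := by
      have := congrFun (add_mulVec_convex_combination hab (B.map ((↑) : ℤ → ℝ))
        (fun i => (u i : ℝ)) t s) i
      simp only [lowerRhs, Pi.add_apply, Pi.smul_apply, smul_eq_mul] at this ⊢
      linarith
    have hti : (β i : ℝ) ≤ lowerRhs B u t i := ht.2.2.1 i
    have hti' : lowerRhs B u t i ≤ β i + 1 := ht.2.2.2 i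
    have hsi := Int.floor_eq_iff.1 (congrFun hsβ i)
    rw [floorVec, Int.floor_eq_iff, hcomb]
    obtain rfl : a = 1 - b := eq_sub_of_add_eq hab
    constructor
    · nlinarith [mul_nonneg ha.le (sub_nonneg.2 hti), mul_nonneg hb.le (sub_nonneg.2 hsi.1)]
    · nlinarith [mul_nonneg ha.le (sub_nonneg.2 hti'), mul_pos hb (sub_pos.2 hsi.2)]

lemma closedSlice_subset_closure_slice {x : Fin n → ℝ} {β : Fin m → ℤ}
    (hS : (slice B C D u p x β).Nonempty) :
    closedSlice B C D u p x β ⊆ closure (slice B C D u p x β) := by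
  obtain ⟨s, hs⟩ := hS
  intro t ht
  exact closure_mono (openSegment_subset_slice ht hs)
    (segment_subset_closure_openSegment (left_mem_segment ℝ t s))

lemma sInf_image_slice_eq_closedSlice (hP : IsBounded (upperP C D p)) (e : Fin d → ℤ)
    {x : Fin n → ℝ} {β : Fin m → ℤ} (hS : (slice B C D u p x β).Nonempty) :
    sInf ((fun z => (fun i => (e i : ℝ)) ⬝ᵥ z) '' slice B C D u p x β) =
      sInf ((fun z => (fun i => (e i : ℝ)) ⬝ᵥ z) '' closedSlice B C D u p x β) :=
  csInf_image_eq_of_subset_closure (by fun_prop) (slice_subset_closedSlice x β)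
    (closedSlice_subset_closure_slice hS) hS
    ((isCompact_closedSlice hP x β).bddBelow_image (by fun_prop))

lemma finite_sliceLabel_image_bilevelF (hP : IsBounded (upperP C D p)) :
    (sliceLabel B u '' bilevelF A B C D ψ u p).Finite := by
  have hF : IsBounded (bilevelF A B C D ψ u p) := hP.subset fun _ hxz => hxz.1
  have hlow : IsBounded (lowerRhs B u '' (Prod.snd '' bilevelF A B C D ψ u p)) := by
    have hcont : Continuous (lowerRhs B u) := by unfold lowerRhs; fun_prop
    exact (hF.image_snd.isCompact_closure.image hcont).isBounded.subset
      (image_mono subset_closure)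
  refine ((hF.image_fst.finite_floorVec_image.image fun k i => (k i : ℝ)).prod
    hlow.finite_floorVec_image).subset ?_
  rintro _ ⟨xz, hxz, rfl⟩
  exact ⟨⟨floorVec xz.1, mem_image_of_mem _ (mem_image_of_mem _ hxz),
      hxz.2.1.intCast_floorVec⟩,
    mem_image_of_mem _ (mem_image_of_mem _ (mem_image_of_mem _ hxz))⟩

theorem exists_sInf_objective_eq_slice (c : Fin n → ℤ) (e : Fin d → ℤ)
    (hP : IsBounded (upperP C D p)) (hF : (bilevelF A B C D ψ u p).Nonempty) :
    ∃ xz ∈ bilevelF A B C D ψ u p, sInf (objective c e '' bilevelF A B C D ψ u p) =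
      (fun i => (c i : ℝ)) ⬝ᵥ xz.1 + sInf ((fun z => (fun i => (e i : ℝ)) ⬝ᵥ z) ''
        slice B C D u p xz.1 (floorVec (lowerRhs B u xz.2))) := by
  set F := bilevelF A B C D ψ u p
  set value : (Fin n → ℝ) × (Fin m → ℤ) → ℝ := fun k =>
    (fun i => (c i : ℝ)) ⬝ᵥ k.1 + sInf ((fun z => (fun i => (e i : ℝ)) ⬝ᵥ z) ''
      slice B C D u p k.1 k.2)
  obtain ⟨_, ⟨xz₀, hxz₀, rfl⟩, hmin⟩ :=
    exists_min_image _ value (finite_sliceLabel_image_bilevelF hP) (hF.image _)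
  have hsliceBdd :
      ∀ x β, BddBelow ((fun z => (fun i => (e i : ℝ)) ⬝ᵥ z) '' slice B C D u p x β) :=
    fun x β => ((isCompact_closedSlice hP x β).bddBelow_image (by fun_prop)).mono
      (image_mono (slice_subset_closedSlice x β))
  have hFBdd : BddBelow (objective c e '' F) :=
    (hP.isCompact_closure.bddBelow_image (by unfold objective; fun_prop)).mono
      (image_mono fun _ hxz => subset_closure hxz.1)
  refine ⟨xz₀, hxz₀, le_antisymm ?_ (le_csInf (hF.image _) ?_)⟩
  · rw [← sub_le_iff_le_add']
    refine le_csInf (Nonempty.image _ ⟨xz₀.2, hxz₀.1, rfl⟩) ?_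
    rintro _ ⟨z, hz, rfl⟩
    rw [sub_le_iff_le_add']
    exact csInf_le hFBdd ⟨(xz₀.1, z), mem_bilevelF_of_floorVec_eq hxz₀ hz.1 hz.2, rfl⟩
  · rintro _ ⟨xz, hxz, rfl⟩
    calc value (sliceLabel B u xz₀) ≤ value (sliceLabel B u xz) := hmin _ ⟨xz, hxz, rfl⟩
      _ ≤ objective c e xz :=
          add_le_add_right (csInf_le (hsliceBdd _ _) ⟨xz.2, ⟨hxz.1, rfl⟩, rfl⟩) _

end

theorem bmilp_infimum_slice_representation_general
    {n d m h : ℕ}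
    (A : Matrix (Fin m) (Fin n) ℤ) (B : Matrix (Fin m) (Fin d) ℤ)
    (C : Matrix (Fin h) (Fin n) ℤ) (D : Matrix (Fin h) (Fin d) ℤ)
    (c : Fin n → ℤ) (e : Fin d → ℤ) (ψ : Fin n → ℤ) (u : Fin m → ℤ) (p : Fin h → ℤ)
    -- boundedness assumptions
    (hPbdd : Bornology.IsBounded (upperP C D p))
    -- feasibility
    (hfeas : (bilevelF A B C D ψ u p).Nonempty)
    -- the infimum value
    (vstar : ℝ)
    (hvstar : vstar = sInf ((fun xz : (Fin n → ℝ) × (Fin d → ℝ) =>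
      (fun i => (c i : ℝ)) ⬝ᵥ xz.1 + (fun i => (e i : ℝ)) ⬝ᵥ xz.2) '' bilevelF A B C D ψ u p)) :
    ∃ (xstar : Fin n → ℤ) (β : Fin m → ℤ),
      ∀ T : Set (Fin d → ℝ),
        T = {z | 0 ≤ z ∧
          (D.map ((↑) : ℤ → ℝ)).mulVec z ≤
            (fun i => (p i : ℝ)) - (C.map ((↑) : ℤ → ℝ)).mulVec (fun i => (xstar i : ℝ)) ∧
          (fun i => (β i : ℝ)) ≤ (B.map ((↑) : ℤ → ℝ)).mulVec z + (fun i => (u i : ℝ)) ∧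
          (B.map ((↑) : ℤ → ℝ)).mulVec z + (fun i => (u i : ℝ)) ≤ (fun i => (β i : ℝ) + 1)} →
        (T.Nonempty ∧ IsCompact T ∧
          vstar = (fun i => (c i : ℝ)) ⬝ᵥ (fun i => (xstar i : ℝ)) +
            sInf ((fun z => (fun i => (e i : ℝ)) ⬝ᵥ z) '' T)) := by
  obtain ⟨⟨x₀, z₀⟩, hxz₀, hv⟩ := exists_sInf_objective_eq_slice c e hPbdd hfeas
  set β := floorVec (lowerRhs B u z₀)
  have hS : (slice B C D u p x₀ β).Nonempty := ⟨z₀, hxz₀.1, rfl⟩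
  have hx₀ : (fun i => ((floorVec x₀ i : ℤ) : ℝ)) = x₀ := hxz₀.2.1.intCast_floorVec
  refine ⟨floorVec x₀, β, fun T hT => ?_⟩
  rw [hx₀]
  obtain rfl : T = closedSlice B C D u p x₀ β := by rw [hT, hx₀]; rfl
  exact ⟨hS.mono (slice_subset_closedSlice x₀ β), isCompact_closedSlice hPbdd x₀ β,
    by rw [hvstar, ← sInf_image_slice_eq_closedSlice hPbdd e hS]; exact hv⟩

/-- For a feasible BMILP instance with infimum value `v*`, there exist an integer point `x*`
and an integer vector `β` such that the polytope
`T = {z : z ≥ 0, D·z ≤ p − C·x*, β ≤ B·z + u ≤ β + 1}` is nonempty and compact, and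
`v* = c·x* + min {e·z : z ∈ T}`. -/
theorem bmilp_infimum_slice_representation
    {n d m h : ℕ} (hn : 0 < n) (hd : 0 < d) (hm : 0 < m) (hh : 0 < h)
    (A : Matrix (Fin m) (Fin n) ℤ) (B : Matrix (Fin m) (Fin d) ℤ)
    (C : Matrix (Fin h) (Fin n) ℤ) (D : Matrix (Fin h) (Fin d) ℤ)
    (c : Fin n → ℤ) (e : Fin d → ℤ) (ψ : Fin n → ℤ) (u : Fin m → ℤ) (p : Fin h → ℤ)
    -- boundedness assumptions
    (hPbdd : Bornology.IsBounded (upperP C D p))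
    (hLowbdd : ∀ z : Fin d → ℝ, (∃ x : Fin n → ℝ, (x, z) ∈ upperP C D p) →
      Bornology.IsBounded {x : Fin n → ℝ |
        (A.map ((↑) : ℤ → ℝ)).mulVec x ≤
          (B.map ((↑) : ℤ → ℝ)).mulVec z + (fun i => (u i : ℝ))})
    -- feasibility
    (hfeas : (bilevelF A B C D ψ u p).Nonempty)
    -- the infimum value
    (vstar : ℝ)
    (hvstar : vstar = sInf ((fun xz : (Fin n → ℝ) × (Fin d → ℝ) =>
      (fun i => (c i : ℝ)) ⬝ᵥ xz.1 + (fun i => (e i : ℝ)) ⬝ᵥ xz.2) '' bilevelF A B C D ψ u p)) :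
    ∃ (xstar : Fin n → ℤ) (β : Fin m → ℤ),
      ∀ T : Set (Fin d → ℝ),
        T = {z | 0 ≤ z ∧
          (D.map ((↑) : ℤ → ℝ)).mulVec z ≤
            (fun i => (p i : ℝ)) - (C.map ((↑) : ℤ → ℝ)).mulVec (fun i => (xstar i : ℝ)) ∧
          (fun i => (β i : ℝ)) ≤ (B.map ((↑) : ℤ → ℝ)).mulVec z + (fun i => (u i : ℝ)) ∧
          (B.map ((↑) : ℤ → ℝ)).mulVec z + (fun i => (u i : ℝ)) ≤ (fun i => (β i : ℝ) + 1)} →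
        (T.Nonempty ∧ IsCompact T ∧
          vstar = (fun i => (c i : ℝ)) ⬝ᵥ (fun i => (xstar i : ℝ)) +
            sInf ((fun z => (fun i => (e i : ℝ)) ⬝ᵥ z) '' T)) :=
  bmilp_infimum_slice_representation_general A B C D c e ψ u p hPbdd hfeas vstar hvstar
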